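/- arXiv:1205.3694 — 2 statements merged into one kernel-verified Lean document; each statement's English description precedes it below -/
import Mathlib

section
/- Let (X,R,μ) and (Y,R',ν) be probability spaces over K, and let T and S be invertible measure preserving transformations of (X,R,μ) and (Y,R',ν) respectively. If T and S are conjugate, i.e. there exists a measure algebra isomorphism Φ : (R,μ) → (R',ν) with Φ(T⁻¹(A)) = S⁻¹(Φ(A)) for every A ∈ R, then the measure-theoretic entropies agree: h_μ(T) = h_ν(S). -/
open scoped Classical

/-- A covering ring of subsets of `X`: it covers `X` and is closed under
intersections, unions and differences. -/
def IsCoveringRing {X : Type*} (R : Set (Set X)) : Prop :=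
  (∀ x : X, ∃ A ∈ R, x ∈ A) ∧
    ∀ A ∈ R, ∀ B ∈ R, A ∩ B ∈ R ∧ A ∪ B ∈ R ∧ A \ B ∈ R

/-- `R` is separating: distinct points can be separated by a member of `R`. -/
def Separating {X : Type*} (R : Set (Set X)) : Prop :=
  ∀ x y : X, x ≠ y → ∃ A ∈ R, x ∈ A ∧ y ∉ A

/-- A shrinking collection: the intersection of any two members contains a member. -/
def Shrinking {X : Type*} (𝒜 : Set (Set X)) : Prop :=
  ∀ A ∈ 𝒜, ∀ B ∈ 𝒜, ∃ C ∈ 𝒜, C ⊆ A ∩ B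

/-- A `K`-valued measure on a covering ring `R`: additive, bounded and continuous. -/
structure IsKMeasure {X : Type*} {K : Type*} [NormedField K]
    (R : Set (Set X)) (μ : Set X → K) : Prop where
  additive : ∀ A ∈ R, ∀ B ∈ R, Disjoint A B → μ (A ∪ B) = μ A + μ B
  bounded : ∀ A ∈ R, ∃ M : ℝ, ∀ B ∈ R, B ⊆ A → ‖μ B‖ ≤ M
  cont : ∀ 𝒜 ⊆ R, Shrinking 𝒜 → ⋂₀ 𝒜 = ∅ →
    ∀ ε : ℝ, 0 < ε → ∃ A₀ ∈ 𝒜, ∀ A ∈ 𝒜, A ⊆ A₀ → ‖μ A‖ < ε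

/-- `‖A‖_μ = sup {|μ B| : B ∈ R, B ⊆ A}`. -/
noncomputable def setNorm {X K : Type*} [NormedField K]
    (R : Set (Set X)) (μ : Set X → K) (A : Set X) : ℝ :=
  sSup {r : ℝ | ∃ B ∈ R, B ⊆ A ∧ r = ‖μ B‖}

/-- `N_μ(x) = inf {‖A‖_μ : A ∈ R, x ∈ A}`. -/
noncomputable def normFun {X K : Type*} [NormedField K]
    (R : Set (Set X)) (μ : Set X → K) (x : X) : ℝ :=
  sInf {r : ℝ | ∃ A ∈ R, x ∈ A ∧ r = setNorm R μ A}

/-- `‖f‖_μ = sup_{x ∈ X} |f x| ⬝ N_μ(x)`. -/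
noncomputable def fNorm {X K : Type*} [NormedField K]
    (R : Set (Set X)) (μ : Set X → K) (f : X → K) : ℝ :=
  sSup {r : ℝ | ∃ x : X, r = ‖f x‖ * normFun R μ x}

/-- A probability space: `R` is a covering algebra and `μ(X) = 1`. -/
def IsProbSpace {X K : Type*} [NormedField K] (R : Set (Set X)) (μ : Set X → K) : Prop :=
  IsCoveringRing R ∧ Set.univ ∈ R ∧ IsKMeasure R μ ∧ μ Set.univ = 1

/-- A measure algebra isomorphism `(R,μ) → (R',ν)`. -/
def IsMeasAlgIso {X Y K : Type*} [NormedField K] (R : Set (Set X)) (μ : Set X → K)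
    (R' : Set (Set Y)) (ν : Set Y → K) (Φ : Set X → Set Y) : Prop :=
  Set.BijOn Φ R R' ∧
    (∀ A ∈ R, ∀ B ∈ R, Φ (A ∪ B) = Φ A ∪ Φ B) ∧
    (∀ A ∈ R, Φ (Set.univ \ A) = Set.univ \ Φ A) ∧
    (∀ A ∈ R, ν (Φ A) = μ A)

/-- An invertible measure preserving transformation of `(X,R,μ)`. -/
def IsInvMPT {X K : Type*} [NormedField K] (R : Set (Set X)) (μ : Set X → K)
    (T : X → X) : Prop :=
  Function.Bijective T ∧
    (∀ A ∈ R, T '' A ∈ R) ∧ (∀ A ∈ R, T ⁻¹' A ∈ R) ∧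
    (∀ A ∈ R, μ (T '' A) = μ A) ∧ (∀ A ∈ R, μ (T ⁻¹' A) = μ A)

/-- A finite partition of `X` by pairwise disjoint nonempty members of `R`. -/
def IsFinPartition {X : Type*} (R : Set (Set X)) (α : Finset (Set X)) : Prop :=
  (∀ A ∈ α, A ∈ R) ∧ (∀ A ∈ α, A ≠ ∅) ∧
    (∀ A ∈ α, ∀ B ∈ α, A ≠ B → Disjoint A B) ∧
    ⋃₀ (α : Set (Set X)) = Set.univ

/-- The join `α ∨ β` of two partitions, discarding empty intersections. -/
noncomputable def pJoin {X : Type*} (α β : Finset (Set X)) : Finset (Set X) :=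
  (Finset.image₂ (fun A B => A ∩ B) α β).filter (fun C => C ≠ ∅)

/-- `M(α)`: the number of members of `α` of positive norm. -/
noncomputable def Mcard {X K : Type*} [NormedField K] (R : Set (Set X)) (μ : Set X → K)
    (α : Finset (Set X)) : ℕ :=
  (α.filter (fun A => 0 < setNorm R μ A)).card

/-- `H_μ(α) = (min {‖A‖_μ : A ∈ α, ‖A‖_μ > 0}) * log₂ M(α)` (and `0` if `M(α) = 0`,
since `sInf ∅ = 0` and `log₂ 0 = 0` in Mathlib). -/
noncomputable def Hent {X K : Type*} [NormedField K] (R : Set (Set X)) (μ : Set X → K)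
    (α : Finset (Set X)) : ℝ :=
  sInf {r : ℝ | ∃ A ∈ α, 0 < setNorm R μ A ∧ r = setNorm R μ A} *
    Real.logb 2 (Mcard R μ α)

/-- `joinSeq T α n = α ∨ T⁻¹α ∨ ⋯ ∨ T^{-n}α`. -/
noncomputable def joinSeq {X : Type*} (T : X → X) (α : Finset (Set X)) : ℕ → Finset (Set X)
  | 0 => α
  | n + 1 => pJoin (joinSeq T α n) (α.image (fun A => T^[n + 1] ⁻¹' A))

/-- `h_μ(T,α) = lim_{n→∞} H_μ(α ∨ T⁻¹α ∨ ⋯ ∨ T^{-(n-1)}α)/n`. -/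
noncomputable def hMeasPart {X K : Type*} [NormedField K] (R : Set (Set X)) (μ : Set X → K)
    (T : X → X) (α : Finset (Set X)) : ℝ :=
  Filter.limUnder Filter.atTop (fun n : ℕ => Hent R μ (joinSeq T α n) / (n + 1))

/-- `h_μ(T) = sup_α h_μ(T,α)` over finite partitions `α` of `X` relative to `R`. -/
noncomputable def hMeas {X K : Type*} [NormedField K] (R : Set (Set X)) (μ : Set X → K)
    (T : X → X) : ℝ :=
  sSup {r : ℝ | ∃ α : Finset (Set X), IsFinPartition R α ∧ r = hMeasPart R μ T α}

/-- The partition `α(𝒰)` associated to a finite cover `𝒰`: nonempty sets of the form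
`A₁ ∩ ⋯ ∩ A_k` where each `Aᵢ` is `Uᵢ` or `X ∖ Uᵢ`. -/
noncomputable def coverPart {X : Type*} (𝒰 : Finset (Set X)) : Finset (Set X) :=
  ((𝒰.powerset).image fun S => (⋂ U ∈ S, U) ∩ ⋂ U ∈ 𝒰 \ S, (Set.univ \ U)).filter
    (fun C => C ≠ ∅)

/-- The join `𝒰 ∨ 𝒲` of two covers. -/
noncomputable def cJoin {X : Type*} (𝒰 𝒲 : Finset (Set X)) : Finset (Set X) :=
  Finset.image₂ (fun U W => U ∩ W) 𝒰 𝒲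

/-- `N(𝒰)`: the least cardinality of a subcover of `𝒰`. -/
noncomputable def coverN {X : Type*} (𝒰 : Finset (Set X)) : ℕ :=
  sInf {n : ℕ | ∃ 𝒱 : Finset (Set X), 𝒱 ⊆ 𝒰 ∧ ⋃₀ (𝒱 : Set (Set X)) = Set.univ ∧ 𝒱.card = n}

/-- `H_top(𝒰) = log₂ N(𝒰)`. -/
noncomputable def Htop {X : Type*} (𝒰 : Finset (Set X)) : ℝ :=
  Real.logb 2 (coverN 𝒰)

/-- `cJoinSeq T 𝒰 n = 𝒰 ∨ T⁻¹𝒰 ∨ ⋯ ∨ T^{-n}𝒰`. -/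
noncomputable def cJoinSeq {X : Type*} (T : X → X) (𝒰 : Finset (Set X)) : ℕ → Finset (Set X)
  | 0 => 𝒰
  | n + 1 => cJoin (cJoinSeq T 𝒰 n) (𝒰.image (fun U => T^[n + 1] ⁻¹' U))

/-- `h_top(T,𝒰) = lim_{n→∞} H_top(𝒰 ∨ T⁻¹𝒰 ∨ ⋯ ∨ T^{-(n-1)}𝒰)/n`. -/
noncomputable def hTopCov {X : Type*} (T : X → X) (𝒰 : Finset (Set X)) : ℝ :=
  Filter.limUnder Filter.atTop (fun n : ℕ => Htop (cJoinSeq T 𝒰 n) / (n + 1))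

/-- `h_top(T) = sup_𝒰 h_top(T,𝒰)` over finite open covers `𝒰` of `X` for the
topology `t`. -/
noncomputable def hTop {X : Type*} (t : TopologicalSpace X) (T : X → X) : ℝ :=
  sSup {r : ℝ | ∃ 𝒰 : Finset (Set X), (∀ U ∈ 𝒰, t.IsOpen U) ∧
    ⋃₀ (𝒰 : Set (Set X)) = Set.univ ∧ r = hTopCov T 𝒰}

/-! A measure algebra isomorphism `Φ` commutes with the finite Boolean operations and preserves
`‖·‖_μ`, and conjugacy makes it commute with preimages under all iterates. Hence `Φ` carries a
partition `α` to a partition `Φα` and each refinement `α ∨ T⁻¹α ∨ ⋯ ∨ T^{-n}α` to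
`Φα ∨ S⁻¹Φα ∨ ⋯ ∨ S^{-n}Φα`, with the same entropy; so `h_μ(T,α) = h_ν(S,Φα)`. With the inverse
isomorphism, the sets of values `h_μ(T,α)` and `h_ν(S,β)` coincide, and hence so do their suprema. -/

open Set

def IsCoveringAlgebra {X : Type*} (R : Set (Set X)) : Prop :=
  IsCoveringRing R ∧ univ ∈ R

namespace IsCoveringRing

variable {X : Type*} {R : Set (Set X)} {A B : Set X}

theorem inter_mem (hR : IsCoveringRing R) (hA : A ∈ R) (hB : B ∈ R) : A ∩ B ∈ R :=
  (hR.2 A hA B hB).1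

theorem union_mem (hR : IsCoveringRing R) (hA : A ∈ R) (hB : B ∈ R) : A ∪ B ∈ R :=
  (hR.2 A hA B hB).2.1

theorem diff_mem (hR : IsCoveringRing R) (hA : A ∈ R) (hB : B ∈ R) : A \ B ∈ R :=
  (hR.2 A hA B hB).2.2

end IsCoveringRing

namespace IsCoveringAlgebra

variable {X : Type*} {R : Set (Set X)}

theorem compl_mem (hR : IsCoveringAlgebra R) {A : Set X} (hA : A ∈ R) : univ \ A ∈ R :=
  hR.1.diff_mem hR.2 hA

theorem empty_mem (hR : IsCoveringAlgebra R) : ∅ ∈ R := by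
  simpa using hR.1.diff_mem hR.2 hR.2

theorem sUnion_mem (hR : IsCoveringAlgebra R) {α : Finset (Set X)} (hα : ∀ A ∈ α, A ∈ R) :
    ⋃₀ (α : Set (Set X)) ∈ R := by
  induction α using Finset.induction_on with
  | empty => simpa using hR.empty_mem
  | insert A α _ ih =>
    rw [Finset.coe_insert, sUnion_insert]
    exact hR.1.union_mem (hα A (Finset.mem_insert_self A α))
      (ih fun B hB => hα B (Finset.mem_insert_of_mem hB))

end IsCoveringAlgebra

theorem preimage_iterate_mem {X : Type*} {R : Set (Set X)} {T : X → X}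
    (hT : ∀ A ∈ R, T ⁻¹' A ∈ R) (k : ℕ) {A : Set X} (hA : A ∈ R) : T^[k] ⁻¹' A ∈ R := by
  rw [preimage_iterate_eq]
  exact MapsTo.iterate hT k hA

theorem pJoin_mem {X : Type*} {R : Set (Set X)} (hR : IsCoveringRing R) {α β : Finset (Set X)}
    (hα : ∀ A ∈ α, A ∈ R) (hβ : ∀ B ∈ β, B ∈ R) : ∀ C ∈ pJoin α β, C ∈ R := by
  intro C hC
  simp only [pJoin, Finset.mem_filter, Finset.mem_image₂] at hC
  obtain ⟨⟨A, hA, B, hB, rfl⟩, -⟩ := hC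
  exact hR.inter_mem (hα A hA) (hβ B hB)

theorem joinSeq_mem {X : Type*} {R : Set (Set X)} (hR : IsCoveringRing R) {T : X → X}
    (hT : ∀ A ∈ R, T ⁻¹' A ∈ R) {α : Finset (Set X)} (hα : ∀ A ∈ α, A ∈ R) (n : ℕ) :
    ∀ C ∈ joinSeq T α n, C ∈ R := by
  induction n with
  | zero => exact hα
  | succ n ih =>
    refine pJoin_mem hR ih fun B hB => ?_
    obtain ⟨A, hA, rfl⟩ := Finset.mem_image.1 hB
    exact preimage_iterate_mem hT _ (hα A hA)

theorem map_preimage_iterate {X Y : Type*} {R : Set (Set X)} {Φ : Set X → Set Y} {T : X → X}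
    {S : Y → Y} (hT : ∀ A ∈ R, T ⁻¹' A ∈ R) (hΦT : ∀ A ∈ R, Φ (T ⁻¹' A) = S ⁻¹' Φ A) (k : ℕ)
    {A : Set X} (hA : A ∈ R) : Φ (T^[k] ⁻¹' A) = S^[k] ⁻¹' Φ A := by
  induction k with
  | zero => rfl
  | succ k ih =>
    rw [Function.iterate_succ, preimage_comp, hΦT _ (preimage_iterate_mem hT k hA), ih,
      Function.iterate_succ, preimage_comp]

namespace IsMeasAlgIso

variable {X Y K : Type*} [NormedField K] {R : Set (Set X)} {μ : Set X → K}
  {R' : Set (Set Y)} {ν : Set Y → K} {Φ : Set X → Set Y} {A B : Set X}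

theorem map_univ (hΦ : IsMeasAlgIso R μ R' ν Φ) (hR : IsCoveringAlgebra R) :
    Φ univ = univ := by
  have hcompl : Φ ∅ = univ \ Φ univ := by simpa using hΦ.2.2.1 univ hR.2
  have hunion : Φ (univ ∪ ∅) = Φ univ ∪ Φ ∅ := hΦ.2.1 univ hR.2 ∅ hR.empty_mem
  rw [union_empty, hcompl, union_sdiff_self, union_univ] at hunion
  exact hunion

theorem map_empty (hΦ : IsMeasAlgIso R μ R' ν Φ) (hR : IsCoveringAlgebra R) : Φ ∅ = ∅ := by
  simpa [hΦ.map_univ hR] using hΦ.2.2.1 univ hR.2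

theorem map_inter (hΦ : IsMeasAlgIso R μ R' ν Φ) (hR : IsCoveringAlgebra R) (hA : A ∈ R)
    (hB : B ∈ R) : Φ (A ∩ B) = Φ A ∩ Φ B := by
  have hA' := hR.compl_mem hA
  have hB' := hR.compl_mem hB
  have hdeMorgan : A ∩ B = univ \ ((univ \ A) ∪ (univ \ B)) := by
    simp [← compl_eq_univ_sdiff, compl_union]
  rw [hdeMorgan, hΦ.2.2.1 _ (hR.1.union_mem hA' hB'), hΦ.2.1 _ hA' _ hB', hΦ.2.2.1 _ hA,
    hΦ.2.2.1 _ hB]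
  simp [← compl_eq_univ_sdiff, compl_union]

theorem map_eq_empty_iff (hΦ : IsMeasAlgIso R μ R' ν Φ) (hR : IsCoveringAlgebra R)
    (hA : A ∈ R) : Φ A = ∅ ↔ A = ∅ := by
  rw [← hΦ.map_empty hR]
  exact hΦ.1.injOn.eq_iff hA hR.empty_mem

theorem map_subset_map_iff (hΦ : IsMeasAlgIso R μ R' ν Φ) (hR : IsCoveringAlgebra R)
    (hA : A ∈ R) (hB : B ∈ R) : Φ A ⊆ Φ B ↔ A ⊆ B := by
  rw [← inter_eq_left, ← inter_eq_left, ← hΦ.map_inter hR hA hB]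
  exact hΦ.1.injOn.eq_iff (hR.1.inter_mem hA hB) hA

theorem map_sUnion (hΦ : IsMeasAlgIso R μ R' ν Φ) (hR : IsCoveringAlgebra R)
    {α : Finset (Set X)} (hα : ∀ A ∈ α, A ∈ R) :
    Φ (⋃₀ (α : Set (Set X))) = ⋃₀ ((α.image Φ : Finset (Set Y)) : Set (Set Y)) := by
  induction α using Finset.induction_on with
  | empty => simpa using hΦ.map_empty hR
  | insert A α _ ih =>
    have hα' : ∀ B ∈ α, B ∈ R := fun B hB => hα B (Finset.mem_insert_of_mem hB)
    rw [Finset.coe_insert, sUnion_insert, Finset.image_insert, Finset.coe_insert, sUnion_insert,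
      hΦ.2.1 A (hα A (Finset.mem_insert_self A α)) _ (hR.sUnion_mem hα'), ih hα']

theorem setNorm_map (hΦ : IsMeasAlgIso R μ R' ν Φ) (hR : IsCoveringAlgebra R) (hA : A ∈ R) :
    setNorm R' ν (Φ A) = setNorm R μ A := by
  unfold setNorm
  congr 1
  ext r
  constructor
  · rintro ⟨B', hB', hsub, rfl⟩
    obtain ⟨B, hB, rfl⟩ := hΦ.1.surjOn hB'
    exact ⟨B, hB, (hΦ.map_subset_map_iff hR hB hA).1 hsub, by rw [hΦ.2.2.2 B hB]⟩
  · rintro ⟨B, hB, hsub, rfl⟩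
    exact ⟨Φ B, hΦ.1.mapsTo hB, (hΦ.map_subset_map_iff hR hB hA).2 hsub, by rw [hΦ.2.2.2 B hB]⟩

theorem invFunOn (hΦ : IsMeasAlgIso R μ R' ν Φ) (hR : IsCoveringAlgebra R) :
    IsMeasAlgIso R' ν R μ (Function.invFunOn Φ R) := by
  have hinv : LeftInvOn (Function.invFunOn Φ R) Φ R := hΦ.1.injOn.leftInvOn_invFunOn
  refine ⟨hΦ.1.symm hΦ.1.invOn_invFunOn.symm, ?_, ?_, ?_⟩
  · intro A' hA' B' hB'
    obtain ⟨A, hA, rfl⟩ := hΦ.1.surjOn hA'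
    obtain ⟨B, hB, rfl⟩ := hΦ.1.surjOn hB'
    rw [← hΦ.2.1 A hA B hB, hinv (hR.1.union_mem hA hB), hinv hA, hinv hB]
  · intro A' hA'
    obtain ⟨A, hA, rfl⟩ := hΦ.1.surjOn hA'
    rw [← hΦ.2.2.1 A hA, hinv (hR.compl_mem hA), hinv hA]
  · intro A' hA'
    obtain ⟨A, hA, rfl⟩ := hΦ.1.surjOn hA'
    rw [hinv hA, hΦ.2.2.2 A hA]

theorem invFunOn_preimage (hΦ : IsMeasAlgIso R μ R' ν Φ) {T : X → X}
    {S : Y → Y} (hT : ∀ A ∈ R, T ⁻¹' A ∈ R) (hΦT : ∀ A ∈ R, Φ (T ⁻¹' A) = S ⁻¹' Φ A) :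
    ∀ A' ∈ R', Function.invFunOn Φ R (S ⁻¹' A') = T ⁻¹' Function.invFunOn Φ R A' := by
  intro A' hA'
  have hinv : LeftInvOn (Function.invFunOn Φ R) Φ R := hΦ.1.injOn.leftInvOn_invFunOn
  obtain ⟨A, hA, rfl⟩ := hΦ.1.surjOn hA'
  rw [← hΦT A hA, hinv (hT A hA), hinv hA]

theorem image_pJoin (hΦ : IsMeasAlgIso R μ R' ν Φ) (hR : IsCoveringAlgebra R)
    {α β : Finset (Set X)} (hα : ∀ A ∈ α, A ∈ R) (hβ : ∀ B ∈ β, B ∈ R) :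
    (pJoin α β).image Φ = pJoin (α.image Φ) (β.image Φ) := by
  ext C'
  simp only [pJoin, Finset.mem_image, Finset.mem_filter, Finset.mem_image₂]
  constructor
  · rintro ⟨C, ⟨⟨A, hA, B, hB, rfl⟩, hne⟩, rfl⟩
    refine ⟨⟨Φ A, ⟨A, hA, rfl⟩, Φ B, ⟨B, hB, rfl⟩, (hΦ.map_inter hR (hα A hA) (hβ B hB)).symm⟩, ?_⟩
    exact (hΦ.map_eq_empty_iff hR (hR.1.inter_mem (hα A hA) (hβ B hB))).not.2 hne
  · rintro ⟨⟨A', ⟨A, hA, rfl⟩, B', ⟨B, hB, rfl⟩, rfl⟩, hne⟩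
    rw [← hΦ.map_inter hR (hα A hA) (hβ B hB)] at hne ⊢
    refine ⟨A ∩ B, ⟨⟨A, hA, B, hB, rfl⟩, ?_⟩, rfl⟩
    exact (hΦ.map_eq_empty_iff hR (hR.1.inter_mem (hα A hA) (hβ B hB))).not.1 hne

theorem image_joinSeq (hΦ : IsMeasAlgIso R μ R' ν Φ) (hR : IsCoveringAlgebra R) {T : X → X}
    {S : Y → Y} (hT : ∀ A ∈ R, T ⁻¹' A ∈ R) (hΦT : ∀ A ∈ R, Φ (T ⁻¹' A) = S ⁻¹' Φ A)
    {α : Finset (Set X)} (hα : ∀ A ∈ α, A ∈ R) (n : ℕ) :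
    (joinSeq T α n).image Φ = joinSeq S (α.image Φ) n := by
  induction n with
  | zero => rfl
  | succ n ih =>
    have hpre : ∀ B ∈ α.image (fun A => T^[n + 1] ⁻¹' A), B ∈ R := by
      simp only [Finset.mem_image, forall_exists_index, and_imp, forall_apply_eq_imp_iff₂]
      exact fun A hA => preimage_iterate_mem hT _ (hα A hA)
    rw [joinSeq, joinSeq, hΦ.image_pJoin hR (joinSeq_mem hR.1 hT hα n) hpre, ih,
      Finset.image_image, Finset.image_image]
    congr 1
    exact Finset.image_congr fun A hA => map_preimage_iterate hT hΦT (n + 1) (hα A hA)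

theorem Mcard_image (hΦ : IsMeasAlgIso R μ R' ν Φ) (hR : IsCoveringAlgebra R)
    {α : Finset (Set X)} (hα : ∀ A ∈ α, A ∈ R) : Mcard R' ν (α.image Φ) = Mcard R μ α := by
  unfold Mcard
  rw [Finset.filter_image, Finset.card_image_of_injOn]
  · exact congrArg _ (Finset.filter_congr fun A hA => by rw [hΦ.setNorm_map hR (hα A hA)])
  · exact hΦ.1.injOn.mono fun A hA => hα A (Finset.mem_filter.1 hA).1

theorem Hent_image (hΦ : IsMeasAlgIso R μ R' ν Φ) (hR : IsCoveringAlgebra R)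
    {α : Finset (Set X)} (hα : ∀ A ∈ α, A ∈ R) : Hent R' ν (α.image Φ) = Hent R μ α := by
  unfold Hent
  rw [hΦ.Mcard_image hR hα]
  congr 2
  ext r
  simp only [Finset.mem_image, exists_exists_and_eq_and]
  exact exists_congr fun A => and_congr_right fun hA => by rw [hΦ.setNorm_map hR (hα A hA)]

theorem hMeasPart_image (hΦ : IsMeasAlgIso R μ R' ν Φ) (hR : IsCoveringAlgebra R) {T : X → X}
    {S : Y → Y} (hT : ∀ A ∈ R, T ⁻¹' A ∈ R) (hΦT : ∀ A ∈ R, Φ (T ⁻¹' A) = S ⁻¹' Φ A)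
    {α : Finset (Set X)} (hα : ∀ A ∈ α, A ∈ R) :
    hMeasPart R' ν S (α.image Φ) = hMeasPart R μ T α := by
  unfold hMeasPart
  congr 1
  funext n
  rw [← hΦ.image_joinSeq hR hT hΦT hα n, hΦ.Hent_image hR (joinSeq_mem hR.1 hT hα n)]

theorem isFinPartition_image (hΦ : IsMeasAlgIso R μ R' ν Φ) (hR : IsCoveringAlgebra R)
    {α : Finset (Set X)} (hα : IsFinPartition R α) : IsFinPartition R' (α.image Φ) := by
  obtain ⟨hmem, hne, hdisj, hcover⟩ := hα
  simp only [IsFinPartition, Finset.mem_image, forall_exists_index, and_imp,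
    forall_apply_eq_imp_iff₂]
  refine ⟨fun A hA => hΦ.1.mapsTo (hmem A hA),
    fun A hA => (hΦ.map_eq_empty_iff hR (hmem A hA)).not.2 (hne A hA), ?_, ?_⟩
  · intro A hA B hB hne'
    rw [disjoint_iff_inter_eq_empty, ← hΦ.map_inter hR (hmem A hA) (hmem B hB),
      hΦ.map_eq_empty_iff hR (hR.1.inter_mem (hmem A hA) (hmem B hB)),
      ← disjoint_iff_inter_eq_empty]
    exact hdisj A hA B hB fun h => hne' (congrArg Φ h)
  · rw [← hΦ.map_sUnion hR hmem, hcover, hΦ.map_univ hR]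

theorem setOf_hMeasPart_subset (hΦ : IsMeasAlgIso R μ R' ν Φ) (hR : IsCoveringAlgebra R)
    {T : X → X} {S : Y → Y} (hT : ∀ A ∈ R, T ⁻¹' A ∈ R)
    (hΦT : ∀ A ∈ R, Φ (T ⁻¹' A) = S ⁻¹' Φ A) :
    {r | ∃ α, IsFinPartition R α ∧ r = hMeasPart R μ T α} ⊆
      {r | ∃ β, IsFinPartition R' β ∧ r = hMeasPart R' ν S β} := by
  rintro r ⟨α, hα, rfl⟩
  exact ⟨α.image Φ, hΦ.isFinPartition_image hR hα, (hΦ.hMeasPart_image hR hT hΦT hα.1).symm⟩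

end IsMeasAlgIso

theorem stmt16_general {X Y K : Type*} [NontriviallyNormedField K]
    (R : Set (Set X)) (μ : Set X → K) (hXp : IsProbSpace R μ)
    (R' : Set (Set Y)) (ν : Set Y → K) (hYp : IsProbSpace R' ν)
    (T : X → X) (hT : IsInvMPT R μ T) (S : Y → Y) (hS : IsInvMPT R' ν S)
    (Φ : Set X → Set Y) (hΦ : IsMeasAlgIso R μ R' ν Φ)
    (hΦT : ∀ A ∈ R, Φ (T ⁻¹' A) = S ⁻¹' (Φ A)) :
    hMeas R μ T = hMeas R' ν S := by
  have hR : IsCoveringAlgebra R := ⟨hXp.1, hXp.2.1⟩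
  have hR' : IsCoveringAlgebra R' := ⟨hYp.1, hYp.2.1⟩
  have hΨ := hΦ.invFunOn hR
  have hΨS := hΦ.invFunOn_preimage hT.2.2.1 hΦT
  unfold hMeas
  congr 1
  exact (hΦ.setOf_hMeasPart_subset hR hT.2.2.1 hΦT).antisymm
    (hΨ.setOf_hMeasPart_subset hR' hS.2.2.1 hΨS)

/-- Conjugate invertible measure preserving transformations have the same
measure-theoretic entropy. -/
theorem stmt16 {X Y K : Type*} [NontriviallyNormedField K] [CompleteSpace K]
    (hna : IsNonarchimedean (norm : K → ℝ))
    (R : Set (Set X)) (μ : Set X → K) (hXp : IsProbSpace R μ)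
    (R' : Set (Set Y)) (ν : Set Y → K) (hYp : IsProbSpace R' ν)
    (T : X → X) (hT : IsInvMPT R μ T) (S : Y → Y) (hS : IsInvMPT R' ν S)
    (Φ : Set X → Set Y) (hΦ : IsMeasAlgIso R μ R' ν Φ)
    (hΦT : ∀ A ∈ R, Φ (T ⁻¹' A) = S ⁻¹' (Φ A)) :
    hMeas R μ T = hMeas R' ν S :=
  stmt16_general R μ hXp R' ν hYp T hT S hS Φ hΦ hΦT
end

section
/- Let (X,R,μ) be a probability space over K with R separating, such that X is compact in the topology generated by R (the members of R form a base of open sets). Suppose that X₀(μ) = ∅ and that ‖A‖_μ = 1 for every nonempty A ∈ R. Let T be an invertible measure preserving transformation of (X,R,μ) (note that T is then a homeomorphism for this topology). Then the measure-theoretic entropy equals the topological entropy: h_μ(T) = h_top(T). -/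
open scoped Classical

/-!
Because every nonempty member of `R` has norm `1`, the measure-theoretic entropy of a finite
partition `β` is just `log₂ |β|`. A partition has no proper subcover, so `log₂ |β| = H_top(β)`;
since `α ∨ ⋯ ∨ T^{-n}α` and `𝒰 ∨ ⋯ ∨ T^{-n}𝒰` (for `𝒰 = α`) differ only by empty members,
`h_μ(T, α) = h_top(T, α)` for every partition `α`, the limit on the topological side existing by
Fekete's lemma. Conversely, `R` is a base of the topology, so by compactness every open cover
is refined by a finite cover by members of `R`, which in turn is refined by the partition into
its atoms; as `h_top(T, ·)` grows under refinement, the two suprema coincide.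
-/

open Set Filter Topology MeasureTheory TopologicalSpace

section Covers

variable {X : Type*}

def IsCover (𝒰 : Finset (Set X)) : Prop := ⋃₀ (𝒰 : Set (Set X)) = univ

theorem isCover_iff {𝒰 : Finset (Set X)} : IsCover 𝒰 ↔ ∀ x, ∃ U ∈ 𝒰, x ∈ U := by
  simp [IsCover, sUnion_eq_univ_iff]

def Refines (𝒱 𝒰 : Finset (Set X)) : Prop := ∀ V ∈ 𝒱, ∃ U ∈ 𝒰, V ⊆ U

theorem Refines.trans {𝒲 𝒱 𝒰 : Finset (Set X)} (h₁ : Refines 𝒲 𝒱) (h₂ : Refines 𝒱 𝒰) :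
    Refines 𝒲 𝒰 := fun W hW => by
  obtain ⟨V, hV, hWV⟩ := h₁ W hW
  obtain ⟨U, hU, hVU⟩ := h₂ V hV
  exact ⟨U, hU, hWV.trans hVU⟩

theorem mem_cJoin {𝒰 𝒲 : Finset (Set X)} {C : Set X} :
    C ∈ cJoin 𝒰 𝒲 ↔ ∃ U ∈ 𝒰, ∃ W ∈ 𝒲, U ∩ W = C := Finset.mem_image₂

theorem IsCover.cJoin {𝒰 𝒲 : Finset (Set X)} (h₁ : IsCover 𝒰) (h₂ : IsCover 𝒲) :
    IsCover (cJoin 𝒰 𝒲) := isCover_iff.2 fun x => by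
  obtain ⟨U, hU, hxU⟩ := isCover_iff.1 h₁ x
  obtain ⟨W, hW, hxW⟩ := isCover_iff.1 h₂ x
  exact ⟨U ∩ W, mem_cJoin.2 ⟨U, hU, W, hW, rfl⟩, hxU, hxW⟩

theorem IsCover.image_preimage {𝒰 : Finset (Set X)} (f : X → X) (h : IsCover 𝒰) :
    IsCover (𝒰.image (f ⁻¹' ·)) := isCover_iff.2 fun x => by
  obtain ⟨U, hU, hxU⟩ := isCover_iff.1 h (f x)
  exact ⟨f ⁻¹' U, Finset.mem_image_of_mem _ hU, hxU⟩

theorem IsCover.cJoinSeq {𝒰 : Finset (Set X)} (T : X → X) (h : IsCover 𝒰) :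
    ∀ n, IsCover (cJoinSeq T 𝒰 n)
  | 0 => h
  | n + 1 => (h.cJoinSeq T n).cJoin (h.image_preimage _)

theorem Refines.cJoin {𝒰 𝒱 𝒲 𝒲' : Finset (Set X)} (h₁ : Refines 𝒱 𝒰) (h₂ : Refines 𝒲' 𝒲) :
    Refines (cJoin 𝒱 𝒲') (cJoin 𝒰 𝒲) := by
  intro C hC
  obtain ⟨V, hV, W', hW', rfl⟩ := mem_cJoin.1 hC
  obtain ⟨U, hU, hVU⟩ := h₁ V hV
  obtain ⟨W, hW, hW'W⟩ := h₂ W' hW'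
  exact ⟨U ∩ W, mem_cJoin.2 ⟨U, hU, W, hW, rfl⟩, inter_subset_inter hVU hW'W⟩

theorem Refines.image_preimage {𝒰 𝒱 : Finset (Set X)} (f : X → X) (h : Refines 𝒱 𝒰) :
    Refines (𝒱.image (f ⁻¹' ·)) (𝒰.image (f ⁻¹' ·)) := by
  intro C hC
  obtain ⟨V, hV, rfl⟩ := Finset.mem_image.1 hC
  obtain ⟨U, hU, hVU⟩ := h V hV
  exact ⟨f ⁻¹' U, Finset.mem_image_of_mem _ hU, preimage_mono hVU⟩

theorem Refines.cJoinSeq {𝒰 𝒱 : Finset (Set X)} (T : X → X) (h : Refines 𝒱 𝒰) :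
    ∀ n, Refines (cJoinSeq T 𝒱 n) (cJoinSeq T 𝒰 n)
  | 0 => h
  | n + 1 => (h.cJoinSeq T n).cJoin (h.image_preimage _)

theorem cJoinSeq_add_add_one (T : X → X) (𝒰 : Finset (Set X)) (m n : ℕ) :
    cJoinSeq T 𝒰 (m + n + 1) =
      cJoin (cJoinSeq T 𝒰 m) ((cJoinSeq T 𝒰 n).image (T^[m + 1] ⁻¹' ·)) := by
  induction n with
  | zero => rfl
  | succ n ih =>
    have himage : (𝒰.image (T^[n + 1] ⁻¹' ·)).image (T^[m + 1] ⁻¹' ·) =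
        𝒰.image (T^[m + n + 1 + 1] ⁻¹' ·) := by
      rw [Finset.image_image]
      refine Finset.image_congr fun U _ => ?_
      simp only [Function.comp_apply, ← preimage_comp, ← Function.iterate_add]
      congr 2
      omega
    have hdistrib : (cJoin (cJoinSeq T 𝒰 n) (𝒰.image (T^[n + 1] ⁻¹' ·))).image (T^[m + 1] ⁻¹' ·) =
        cJoin ((cJoinSeq T 𝒰 n).image (T^[m + 1] ⁻¹' ·))
          ((𝒰.image (T^[n + 1] ⁻¹' ·)).image (T^[m + 1] ⁻¹' ·)) :=
      Finset.image_image₂_distrib fun _ _ => preimage_inter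
    change cJoin (cJoinSeq T 𝒰 (m + n + 1)) (𝒰.image (T^[m + n + 1 + 1] ⁻¹' ·)) =
      cJoin (cJoinSeq T 𝒰 m)
        ((cJoin (cJoinSeq T 𝒰 n) (𝒰.image (T^[n + 1] ⁻¹' ·))).image (T^[m + 1] ⁻¹' ·))
    rw [ih, hdistrib, himage]
    exact Finset.image₂_assoc fun _ _ _ => inter_assoc _ _ _

theorem coverN_le {𝒰 𝒱 : Finset (Set X)} (hsub : 𝒱 ⊆ 𝒰) (hcov : IsCover 𝒱) :
    coverN 𝒰 ≤ 𝒱.card :=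
  Nat.sInf_le ⟨𝒱, hsub, hcov, rfl⟩

theorem exists_subcover_card_eq_coverN {𝒰 : Finset (Set X)} (h : IsCover 𝒰) :
    ∃ 𝒱 ⊆ 𝒰, IsCover 𝒱 ∧ 𝒱.card = coverN 𝒰 :=
  Nat.sInf_mem (s := {n | ∃ 𝒱 : Finset (Set X), 𝒱 ⊆ 𝒰 ∧ ⋃₀ (𝒱 : Set (Set X)) = univ ∧ 𝒱.card = n})
    ⟨𝒰.card, 𝒰, subset_rfl, h, rfl⟩

theorem coverN_cJoin_le {𝒰 𝒲 : Finset (Set X)} (h₁ : IsCover 𝒰) (h₂ : IsCover 𝒲) :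
    coverN (cJoin 𝒰 𝒲) ≤ coverN 𝒰 * coverN 𝒲 := by
  obtain ⟨𝒰', hsub₁, hcov₁, hcard₁⟩ := exists_subcover_card_eq_coverN h₁
  obtain ⟨𝒲', hsub₂, hcov₂, hcard₂⟩ := exists_subcover_card_eq_coverN h₂
  calc coverN (cJoin 𝒰 𝒲) ≤ (cJoin 𝒰' 𝒲').card :=
        coverN_le (Finset.image₂_subset hsub₁ hsub₂) (hcov₁.cJoin hcov₂)
    _ ≤ 𝒰'.card * 𝒲'.card := Finset.card_image₂_le _ _ _
    _ = coverN 𝒰 * coverN 𝒲 := by rw [hcard₁, hcard₂]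

theorem coverN_image_preimage_le {𝒰 : Finset (Set X)} (f : X → X) (h : IsCover 𝒰) :
    coverN (𝒰.image (f ⁻¹' ·)) ≤ coverN 𝒰 := by
  obtain ⟨𝒰', hsub, hcov, hcard⟩ := exists_subcover_card_eq_coverN h
  calc coverN (𝒰.image (f ⁻¹' ·)) ≤ (𝒰'.image (f ⁻¹' ·)).card :=
        coverN_le (Finset.image_subset_image hsub) (hcov.image_preimage f)
    _ ≤ 𝒰'.card := Finset.card_image_le
    _ = coverN 𝒰 := hcard

theorem coverN_le_of_refines {𝒰 𝒱 : Finset (Set X)} (hcov : IsCover 𝒱) (h : Refines 𝒱 𝒰) :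
    coverN 𝒰 ≤ coverN 𝒱 := by
  classical
  obtain ⟨𝒱', hsub, hcov', hcard⟩ := exists_subcover_card_eq_coverN hcov
  choose! g hg𝒰 hVg using h
  calc coverN 𝒰 ≤ (𝒱'.image g).card := by
        refine coverN_le (fun U hU => ?_) (isCover_iff.2 fun x => ?_)
        · obtain ⟨V, hV, rfl⟩ := Finset.mem_image.1 hU
          exact hg𝒰 V (hsub hV)
        · obtain ⟨V, hV, hxV⟩ := isCover_iff.1 hcov' x
          exact ⟨g V, Finset.mem_image_of_mem g hV, hVg V (hsub hV) hxV⟩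
    _ ≤ coverN 𝒱 := Finset.card_image_le.trans hcard.le

theorem coverN_filter_ne_empty {𝒰 : Finset (Set X)} (h : IsCover 𝒰) :
    coverN (𝒰.filter (· ≠ ∅)) = coverN 𝒰 := by
  have hfilter : ∀ {𝒱 : Finset (Set X)}, IsCover 𝒱 → IsCover (𝒱.filter (· ≠ ∅)) :=
    fun h𝒱 => isCover_iff.2 fun x => by
      obtain ⟨V, hV, hxV⟩ := isCover_iff.1 h𝒱 x
      exact ⟨V, Finset.mem_filter.2 ⟨hV, (nonempty_of_mem hxV).ne_empty⟩, hxV⟩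
  apply le_antisymm
  · obtain ⟨𝒱, hsub, hcov, hcard⟩ := exists_subcover_card_eq_coverN h
    exact (coverN_le (Finset.filter_subset_filter _ hsub) (hfilter hcov)).trans
      (Finset.card_filter_le _ _ |>.trans hcard.le)
  · obtain ⟨𝒱, hsub, hcov, hcard⟩ := exists_subcover_card_eq_coverN (hfilter h)
    exact (coverN_le (hsub.trans (Finset.filter_subset _ _)) hcov).trans hcard.le

end Covers

section CoverEntropy

variable {X : Type*}

theorem Real.logb_natCast_le_add {b : ℝ} (hb : 1 < b) {m n k : ℕ} (h : m ≤ n * k) :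
    Real.logb b m ≤ Real.logb b n + Real.logb b k := by
  rcases Nat.eq_zero_or_pos m with rfl | hm
  · have hlogb : 0 < Real.log b := Real.log_pos hb
    have := Real.log_natCast_nonneg n
    have := Real.log_natCast_nonneg k
    rw [Nat.cast_zero, Real.logb_zero, Real.logb, Real.logb]
    positivity
  · have hn : 0 < n := Nat.pos_of_mul_pos_right (hm.trans_le h)
    have hk : 0 < k := Nat.pos_of_mul_pos_left (hm.trans_le h)
    rw [← Real.logb_mul (by positivity) (by positivity)]
    exact Real.logb_le_logb_of_le hb (by positivity) (by exact_mod_cast h)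

theorem Htop_nonneg (𝒰 : Finset (Set X)) : 0 ≤ Htop 𝒰 :=
  div_nonneg (Real.log_natCast_nonneg _) (Real.log_nonneg one_le_two)

theorem Htop_cJoinSeq_add_add_one_le (T : X → X) {𝒰 : Finset (Set X)} (h : IsCover 𝒰)
    (m n : ℕ) :
    Htop (cJoinSeq T 𝒰 (m + n + 1)) ≤ Htop (cJoinSeq T 𝒰 m) + Htop (cJoinSeq T 𝒰 n) := by
  refine Real.logb_natCast_le_add one_lt_two ?_
  rw [cJoinSeq_add_add_one]
  exact (coverN_cJoin_le (h.cJoinSeq T m) ((h.cJoinSeq T n).image_preimage _)).trans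
    (Nat.mul_le_mul_left _ (coverN_image_preimage_le _ (h.cJoinSeq T n)))

-- The `n`-th term joins `n` covers, as in the paper; at `n = 0` truncated subtraction gives `Htop 𝒰`.
theorem subadditive_Htop_cJoinSeq (T : X → X) {𝒰 : Finset (Set X)} (h : IsCover 𝒰) :
    Subadditive fun n => Htop (cJoinSeq T 𝒰 (n - 1)) := by
  rintro (_ | m) (_ | n)
  · exact le_add_of_nonneg_left (Htop_nonneg _)
  · rw [zero_add]
    exact le_add_of_nonneg_left (Htop_nonneg _)
  · exact le_add_of_nonneg_right (Htop_nonneg _)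
  · have hidx : m + 1 + (n + 1) - 1 = m + n + 1 := by omega
    simpa only [hidx, Nat.add_sub_cancel] using Htop_cJoinSeq_add_add_one_le T h m n

theorem tendsto_hTopCov (T : X → X) {𝒰 : Finset (Set X)} (h : IsCover 𝒰) :
    Tendsto (fun n : ℕ => Htop (cJoinSeq T 𝒰 n) / (n + 1)) atTop (𝓝 (hTopCov T 𝒰)) := by
  have hsub := subadditive_Htop_cJoinSeq T h
  have hbdd : BddBelow (range fun n : ℕ => Htop (cJoinSeq T 𝒰 (n - 1)) / n) :=
    ⟨0, by rintro _ ⟨n, rfl⟩; exact div_nonneg (Htop_nonneg _) n.cast_nonneg⟩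
  have hlim := (hsub.tendsto_lim hbdd).comp (tendsto_add_atTop_nat 1)
  simp only [Function.comp_def, Nat.add_sub_cancel, Nat.cast_add, Nat.cast_one] at hlim
  exact tendsto_nhds_limUnder ⟨_, hlim⟩

theorem hTopCov_le_of_refines (T : X → X) {𝒰 𝒱 : Finset (Set X)} (h𝒰 : IsCover 𝒰)
    (h𝒱 : IsCover 𝒱) (h : Refines 𝒱 𝒰) : hTopCov T 𝒰 ≤ hTopCov T 𝒱 := by
  refine le_of_tendsto_of_tendsto' (tendsto_hTopCov T h𝒰) (tendsto_hTopCov T h𝒱) fun n => ?_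
  gcongr
  rcases Nat.eq_zero_or_pos (coverN (cJoinSeq T 𝒰 n)) with h0 | hpos
  · rw [Htop, h0, Nat.cast_zero, Real.logb_zero]
    exact Htop_nonneg _
  · exact Real.logb_le_logb_of_le one_lt_two (by exact_mod_cast hpos)
      (by exact_mod_cast coverN_le_of_refines (h𝒱.cJoinSeq T n) (h.cJoinSeq T n))

end CoverEntropy

section Partitions

variable {X : Type*} {R : Set (Set X)}

theorem IsProbSpace.isSetAlgebra {K : Type*} [NormedField K] {μ : Set X → K}
    (h : IsProbSpace R μ) : IsSetAlgebra R where
  empty_mem := sdiff_self (s := univ) ▸ (h.1.2 _ h.2.1 _ h.2.1).2.2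
  compl_mem := fun _ hs => compl_eq_univ_sdiff _ ▸ (h.1.2 _ h.2.1 _ hs).2.2
  union_mem := fun _ _ hs ht => (h.1.2 _ hs _ ht).2.1

theorem IsFinPartition.isCover {α : Finset (Set X)} (hα : IsFinPartition R α) : IsCover α :=
  hα.2.2.2

theorem mem_pJoin {α β : Finset (Set X)} {C : Set X} :
    C ∈ pJoin α β ↔ (∃ A ∈ α, ∃ B ∈ β, A ∩ B = C) ∧ C ≠ ∅ := by
  rw [pJoin, Finset.mem_filter, Finset.mem_image₂]

theorem IsFinPartition.pJoin (hR : IsSetAlgebra R) {α β : Finset (Set X)}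
    (hα : IsFinPartition R α) (hβ : IsFinPartition R β) : IsFinPartition R (pJoin α β) := by
  refine ⟨fun C hC => ?_, fun C hC => (mem_pJoin.1 hC).2, fun C hC C' hC' hne => ?_,
    isCover_iff.2 fun x => ?_⟩
  · obtain ⟨⟨A, hA, B, hB, rfl⟩, -⟩ := mem_pJoin.1 hC
    exact hR.inter_mem (hα.1 A hA) (hβ.1 B hB)
  · obtain ⟨⟨A, hA, B, hB, rfl⟩, -⟩ := mem_pJoin.1 hC
    obtain ⟨⟨A', hA', B', hB', rfl⟩, -⟩ := mem_pJoin.1 hC'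
    by_cases hAA : A = A'
    · subst hAA
      have hBB : B ≠ B' := by rintro rfl; exact hne rfl
      exact (hβ.2.2.1 B hB B' hB' hBB).mono inter_subset_right inter_subset_right
    · exact (hα.2.2.1 A hA A' hA' hAA).mono inter_subset_left inter_subset_left
  · obtain ⟨A, hA, hxA⟩ := isCover_iff.1 hα.isCover x
    obtain ⟨B, hB, hxB⟩ := isCover_iff.1 hβ.isCover x
    exact ⟨A ∩ B, mem_pJoin.2 ⟨⟨A, hA, B, hB, rfl⟩,
      nonempty_iff_ne_empty.1 ⟨x, hxA, hxB⟩⟩, hxA, hxB⟩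

theorem IsFinPartition.image_preimage {f : X → X} (hf : Function.Surjective f)
    (hfR : ∀ A ∈ R, f ⁻¹' A ∈ R) {α : Finset (Set X)} (hα : IsFinPartition R α) :
    IsFinPartition R (α.image (f ⁻¹' ·)) := by
  refine ⟨?_, ?_, ?_, hα.isCover.image_preimage f⟩
  · simp only [Finset.mem_image]
    rintro _ ⟨A, hA, rfl⟩
    exact hfR A (hα.1 A hA)
  · simp only [Finset.mem_image]
    rintro _ ⟨A, hA, rfl⟩
    exact ((nonempty_iff_ne_empty.2 (hα.2.1 A hA)).preimage hf).ne_empty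
  · simp only [Finset.mem_image]
    rintro _ ⟨A, hA, rfl⟩ _ ⟨A', hA', rfl⟩ hne
    exact (hα.2.2.1 A hA A' hA' (ne_of_apply_ne _ hne)).preimage f

theorem preimage_iterate_mem_s19 {f : X → X} (hfR : ∀ A ∈ R, f ⁻¹' A ∈ R) :
    ∀ n, ∀ A ∈ R, f^[n] ⁻¹' A ∈ R
  | 0, _, hA => hA
  | n + 1, A, hA => by
    rw [Function.iterate_succ', preimage_comp]
    exact preimage_iterate_mem_s19 hfR n _ (hfR A hA)

theorem IsFinPartition.joinSeq (hR : IsSetAlgebra R) {T : X → X}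
    (hT : Function.Surjective T) (hTR : ∀ A ∈ R, T ⁻¹' A ∈ R) {α : Finset (Set X)}
    (hα : IsFinPartition R α) : ∀ n, IsFinPartition R (joinSeq T α n)
  | 0 => hα
  | n + 1 => (hα.joinSeq hR hT hTR n).pJoin hR <|
      hα.image_preimage (hT.iterate (n + 1)) (preimage_iterate_mem_s19 hTR (n + 1))

theorem joinSeq_eq_filter_cJoinSeq (T : X → X) {α : Finset (Set X)} (hne : ∀ A ∈ α, A ≠ ∅) :
    ∀ n, joinSeq T α n = (cJoinSeq T α n).filter (· ≠ ∅)
  | 0 => (Finset.filter_true_of_mem hne).symm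
  | n + 1 => by
    change pJoin (joinSeq T α n) _ = (cJoin (cJoinSeq T α n) _).filter _
    rw [joinSeq_eq_filter_cJoinSeq T hne n]
    ext C
    simp only [mem_pJoin, Finset.mem_filter, mem_cJoin]
    constructor
    · rintro ⟨⟨A, hA, B, hB, rfl⟩, hC⟩
      exact ⟨⟨A, hA.1, B, hB, rfl⟩, hC⟩
    · rintro ⟨⟨A, hA, B, hB, rfl⟩, hC⟩
      exact ⟨⟨A, ⟨hA, fun hA₀ => hC (by rw [hA₀, empty_inter])⟩, B, hB, rfl⟩, hC⟩

theorem coverN_eq_card {β : Finset (Set X)} (hβ : IsFinPartition R β) : coverN β = β.card := by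
  refine le_antisymm (coverN_le subset_rfl hβ.isCover) ?_
  obtain ⟨𝒱, hsub, hcov, hcard⟩ := exists_subcover_card_eq_coverN hβ.isCover
  rw [← hcard]
  refine Finset.card_le_card fun B hB => ?_
  -- A subcover must keep every member: a point of `B` lies in no other member.
  obtain ⟨x, hxB⟩ := nonempty_iff_ne_empty.2 (hβ.2.1 B hB)
  obtain ⟨V, hV, hxV⟩ := isCover_iff.1 hcov x
  by_contra hB𝒱
  have hVB : V ≠ B := by rintro rfl; exact hB𝒱 hV
  exact not_disjoint_iff.2 ⟨x, hxV, hxB⟩ (hβ.2.2.1 V (hsub hV) B hB hVB)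

theorem Hent_eq_logb_card {K : Type*} [NormedField K] {μ : Set X → K} {β : Finset (Set X)}
    (hβ : ∀ A ∈ β, setNorm R μ A = 1) : Hent R μ β = Real.logb 2 β.card := by
  have hM : Mcard R μ β = β.card := by
    rw [Mcard, Finset.filter_true_of_mem fun A hA => by rw [hβ A hA]; exact one_pos]
  rcases β.eq_empty_or_nonempty with rfl | ⟨A, hA⟩
  · simp [Hent, hM]
  have hmin : {r : ℝ | ∃ A ∈ β, 0 < setNorm R μ A ∧ r = setNorm R μ A} = {1} := by
    refine Set.eq_singleton_iff_unique_mem.2 ⟨⟨A, hA, by rw [hβ A hA]; exact one_pos, ?_⟩, ?_⟩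
    · rw [hβ A hA]
    · rintro _ ⟨B, hB, -, rfl⟩
      exact hβ B hB
  rw [Hent, hmin, csInf_singleton, hM, one_mul]

theorem hMeasPart_eq_hTopCov {K : Type*} [NormedField K] {μ : Set X → K} (hR : IsSetAlgebra R)
    {T : X → X} (hT : Function.Surjective T) (hTR : ∀ A ∈ R, T ⁻¹' A ∈ R)
    (hA1 : ∀ A ∈ R, A ≠ ∅ → setNorm R μ A = 1) {α : Finset (Set X)}
    (hα : IsFinPartition R α) : hMeasPart R μ T α = hTopCov T α := by
  refine congrArg _ (funext fun n => congrArg (· / _) ?_)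
  have hjoin := hα.joinSeq hR hT hTR n
  rw [Hent_eq_logb_card fun A hA => hA1 A (hjoin.1 A hA) (hjoin.2.1 A hA), ← coverN_eq_card hjoin,
    joinSeq_eq_filter_cJoinSeq T hα.2.1, coverN_filter_ne_empty (hα.isCover.cJoinSeq T n), Htop]

end Partitions

section Refinement

variable {X : Type*}

theorem MeasureTheory.IsSetAlgebra.isTopologicalBasis_generateFrom {R : Set (Set X)}
    (hR : IsSetAlgebra R) : @IsTopologicalBasis X (generateFrom R) R :=
  letI := generateFrom R
  { exists_subset_inter := fun _ h₁ _ h₂ _ hx => ⟨_, hR.inter_mem h₁ h₂, hx, subset_rfl⟩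
    sUnion_eq := sUnion_eq_univ_iff.2 fun _ => ⟨univ, hR.univ_mem, trivial⟩
    eq_generateFrom := rfl }

theorem TopologicalSpace.IsTopologicalBasis.exists_refines [TopologicalSpace X] [CompactSpace X]
    {B : Set (Set X)} (hB : IsTopologicalBasis B) {𝒰 : Finset (Set X)}
    (hop : ∀ U ∈ 𝒰, IsOpen U) (hcov : IsCover 𝒰) :
    ∃ 𝒱 : Finset (Set X), (∀ V ∈ 𝒱, V ∈ B) ∧ IsCover 𝒱 ∧ Refines 𝒱 𝒰 := by
  obtain ⟨S, hSsub, hSfin, hScov⟩ := isCompact_univ.elim_finite_subcover_image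
    (b := {V ∈ B | ∃ U ∈ 𝒰, V ⊆ U}) (c := id) (fun V hV => hB.isOpen hV.1) fun x _ => by
      obtain ⟨U, hU, hxU⟩ := isCover_iff.1 hcov x
      obtain ⟨V, hVB, hxV, hVU⟩ := hB.exists_subset_of_mem_open hxU (hop U hU)
      exact mem_biUnion ⟨hVB, U, hU, hVU⟩ hxV
  refine ⟨hSfin.toFinset, fun V hV => (hSsub (hSfin.mem_toFinset.1 hV)).1,
    isCover_iff.2 fun x => ?_, fun V hV => (hSsub (hSfin.mem_toFinset.1 hV)).2⟩
  obtain ⟨V, hV, hxV⟩ := mem_iUnion₂.1 (hScov (mem_univ x))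
  exact ⟨V, hSfin.mem_toFinset.2 hV, hxV⟩

theorem mem_atom_iff {𝒱 S : Finset (Set X)} (hS : S ⊆ 𝒱) {x : X} :
    x ∈ (⋂ U ∈ S, U) ∩ ⋂ U ∈ 𝒱 \ S, (univ \ U) ↔ S = 𝒱.filter (x ∈ ·) := by
  simp only [mem_inter_iff, mem_iInter, Set.mem_sdiff, mem_univ, true_and, Finset.mem_sdiff,
    Finset.ext_iff, Finset.mem_filter]
  constructor
  · rintro ⟨hin, hout⟩ U
    exact ⟨fun hU => ⟨hS hU, hin U hU⟩, fun ⟨hU𝒱, hxU⟩ => by_contra fun hU => hout U ⟨hU𝒱, hU⟩ hxU⟩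
  · intro h
    exact ⟨fun U hU => ((h U).1 hU).2, fun U ⟨hU𝒱, hU⟩ hxU => hU ((h U).2 ⟨hU𝒱, hxU⟩)⟩

theorem mem_coverPart {𝒱 : Finset (Set X)} {C : Set X} :
    C ∈ coverPart 𝒱 ↔
      (∃ S ⊆ 𝒱, (⋂ U ∈ S, U) ∩ ⋂ U ∈ 𝒱 \ S, (univ \ U) = C) ∧ C ≠ ∅ := by
  simp only [coverPart, Finset.mem_filter, Finset.mem_image, Finset.mem_powerset]

theorem isFinPartition_coverPart {R : Set (Set X)} (hR : IsSetAlgebra R) {𝒱 : Finset (Set X)}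
    (h𝒱 : ∀ V ∈ 𝒱, V ∈ R) : IsFinPartition R (coverPart 𝒱) := by
  refine ⟨fun C hC => ?_, fun C hC => (mem_coverPart.1 hC).2, fun C hC C' hC' hne => ?_,
    isCover_iff.2 fun x => ⟨_, mem_coverPart.2 ⟨⟨_, Finset.filter_subset _ 𝒱, rfl⟩, ?_⟩,
      (mem_atom_iff (Finset.filter_subset _ 𝒱)).2 rfl⟩⟩
  · obtain ⟨⟨S, hS, rfl⟩, -⟩ := mem_coverPart.1 hC
    exact hR.inter_mem (hR.biInter_mem S fun U hU => h𝒱 U (hS hU))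
      (hR.biInter_mem _ fun U hU => hR.sdiff_mem hR.univ_mem (h𝒱 U (Finset.mem_sdiff.1 hU).1))
  · obtain ⟨⟨S, hS, rfl⟩, -⟩ := mem_coverPart.1 hC
    obtain ⟨⟨S', hS', rfl⟩, -⟩ := mem_coverPart.1 hC'
    refine disjoint_left.2 fun x hx hx' => hne ?_
    rw [(mem_atom_iff hS).1 hx, (mem_atom_iff hS').1 hx']
  · exact nonempty_iff_ne_empty.1 ⟨x, (mem_atom_iff (Finset.filter_subset _ 𝒱)).2 rfl⟩

theorem refines_coverPart {𝒱 : Finset (Set X)} (hcov : IsCover 𝒱) :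
    Refines (coverPart 𝒱) 𝒱 := by
  intro C hC
  obtain ⟨⟨S, hS, rfl⟩, hne⟩ := mem_coverPart.1 hC
  obtain ⟨x, hx⟩ := nonempty_iff_ne_empty.2 hne
  obtain ⟨U, hU, hxU⟩ := isCover_iff.1 hcov x
  have hUS : U ∈ S := by
    rw [(mem_atom_iff hS).1 hx]
    exact Finset.mem_filter.2 ⟨hU, hxU⟩
  exact ⟨U, hU, inter_subset_left.trans (biInter_subset_of_mem hUS)⟩

end Refinement

theorem stmt19_general {X K : Type*} [NontriviallyNormedField K]
    (R : Set (Set X)) (μ : Set X → K) (hXp : IsProbSpace R μ)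
    (hcomp : @CompactSpace X (TopologicalSpace.generateFrom R))
    (hA1 : ∀ A ∈ R, A ≠ ∅ → setNorm R μ A = 1)
    (T : X → X) (hT : IsInvMPT R μ T) :
    hMeas R μ T = hTop (TopologicalSpace.generateFrom R) T := by
  let _ : TopologicalSpace X := generateFrom R
  have hR : IsSetAlgebra R := hXp.isSetAlgebra
  have hpart : ∀ α, IsFinPartition R α → hMeasPart R μ T α = hTopCov T α := fun _ =>
    hMeasPart_eq_hTopCov hR hT.1.2 hT.2.2.1 hA1
  refine csSup_eq_csSup_of_forall_exists_le ?_ ?_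
  · rintro _ ⟨α, hα, rfl⟩
    exact ⟨_, ⟨α, fun U hU => .basic U (hα.1 U hU), hα.isCover, rfl⟩, (hpart α hα).le⟩
  · rintro _ ⟨𝒰, hop, hcov, rfl⟩
    obtain ⟨𝒱, h𝒱R, h𝒱cov, h𝒱ref⟩ := hR.isTopologicalBasis_generateFrom.exists_refines hop hcov
    have hα := isFinPartition_coverPart hR h𝒱R
    refine ⟨_, ⟨_, hα, rfl⟩, ?_⟩
    rw [hpart _ hα]
    exact hTopCov_le_of_refines T hcov hα.isCover ((refines_coverPart h𝒱cov).trans h𝒱ref)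

/-- If `X` is compact in the topology generated by `R`, `X₀(μ) = ∅` and
`‖A‖_μ = 1` for every nonempty `A ∈ R`, then the measure-theoretic entropy of an
invertible measure preserving transformation equals its topological entropy. -/
theorem stmt19 {X K : Type*} [NontriviallyNormedField K] [CompleteSpace K]
    (hna : IsNonarchimedean (norm : K → ℝ))
    (R : Set (Set X)) (μ : Set X → K) (hXp : IsProbSpace R μ) (hsep : Separating R)
    (hcomp : @CompactSpace X (TopologicalSpace.generateFrom R))
    (hX0 : ∀ x : X, normFun R μ x ≠ 0)
    (hA1 : ∀ A ∈ R, A ≠ ∅ → setNorm R μ A = 1)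
    (T : X → X) (hT : IsInvMPT R μ T) :
    hMeas R μ T = hTop (TopologicalSpace.generateFrom R) T :=
  stmt19_general R μ hXp hcomp hA1 T hT
end
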